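/- arXiv:2304.04137 — 4 statements merged into one kernel-verified Lean document; each statement's English description precedes it below -/
import Mathlib

section
/- For any positive semi-definite n×n matrix L, the sum over all subsets A of {1,...,n} of det(L_A) equals det(L + I), where L_A is the principal submatrix of L with rows and columns indexed by A, and the determinant of the empty submatrix is 1. -/
open Matrix

theorem Matrix.det_add_one_eq_sum_det_submatrix {n R : Type*} [Fintype n] [DecidableEq n]
    [CommRing R] (M : Matrix n n R) :
    (M + 1).det = ∑ s : Finset n, (M.submatrix ((↑) : s → n) ((↑) : s → n)).det := by
  -- The determinant is additive in each row separately, so expanding the rows of `M + 1`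
  -- gives one term per choice `s` of rows taken from `M`.
  calc (M + 1).det = detRowAlternating (fun i => M i + (1 : Matrix n n R) i) := rfl
    _ = ∑ s : Finset n, (of (s.piecewise M.row (1 : Matrix n n R).row)).det :=
      detRowAlternating.map_add_univ _ _
    _ = _ := Finset.sum_congr rfl fun s _ => det_piecewise_one_eq_submatrix_det M s

theorem stmt_1_general (n : ℕ) (L : Matrix (Fin n) (Fin n) ℝ) :
    ∑ A : Finset (Fin n),
        (L.submatrix (Subtype.val : A → Fin n) (Subtype.val : A → Fin n)).det =
      (L + 1).det :=
  (L.det_add_one_eq_sum_det_submatrix).symm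

theorem stmt_1 (n : ℕ) (L : Matrix (Fin n) (Fin n) ℝ) (hL : L.PosSemidef) :
    ∑ A : Finset (Fin n),
        (L.submatrix (Subtype.val : A → Fin n) (Subtype.val : A → Fin n)).det =
      (L + 1).det :=
  stmt_1_general n L
end

section
/- Hadamard's inequality for positive semi-definite matrices: if M is an n×n positive semi-definite real matrix, then det(M) ≤ Π_{i=1}^n M_{ii}. -/
/-!
Scaling `M` by `D = diag (M i i)^(-1/2)` on both sides gives a positive semi-definite matrix with
unit diagonal, whose eigenvalues `λ i ≥ 0` therefore sum to `n`. Since `λ ≤ exp (λ - 1)`, their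
product, the determinant, is at most `exp 0 = 1`, i.e. `det M ≤ ∏ i, M i i`. If some `M i i`
vanishes, the basis vector `e i` lies in the kernel of `M` and `det M = 0`.
-/

open Matrix Finset
open scoped ComplexOrder

namespace Matrix.PosSemidef

variable {ι : Type*} [Fintype ι] [DecidableEq ι]

theorem det_eq_zero_of_diag_eq_zero {𝕜 : Type*} [RCLike 𝕜] {A : Matrix ι ι 𝕜}
    (hA : A.PosSemidef) {i : ι} (hi : A i i = 0) : A.det = 0 := by
  have hker : A *ᵥ Pi.single i 1 = 0 := by
    rw [← hA.dotProduct_mulVec_zero_iff]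
    simpa [mulVec_single_one, dotProduct_single] using hi
  exact exists_mulVec_eq_zero_iff.mp ⟨Pi.single i 1, by simp, hker⟩

theorem det_le_exp_trace_sub_card {A : Matrix ι ι ℝ} (hA : A.PosSemidef) :
    A.det ≤ Real.exp (A.trace - Fintype.card ι) := by
  have htrace : A.trace - Fintype.card ι = ∑ i, (hA.1.eigenvalues i - 1) := by
    simp [hA.1.trace_eq_sum_eigenvalues]
  rw [hA.1.det_eq_prod_eigenvalues, htrace, Real.exp_sum]
  simp only [RCLike.ofReal_real_eq_id, id]
  exact prod_le_prod (fun i _ => hA.eigenvalues_nonneg i)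
    fun i _ => by linarith [Real.add_one_le_exp (hA.1.eigenvalues i - 1)]

theorem det_le_one_of_diag_eq_one {A : Matrix ι ι ℝ} (hA : A.PosSemidef) (h : ∀ i, A i i = 1) :
    A.det ≤ 1 := by
  have htrace : A.trace = Fintype.card ι := by simp [trace, h]
  simpa [htrace] using hA.det_le_exp_trace_sub_card

theorem det_le_prod_diag {A : Matrix ι ι ℝ} (hA : A.PosSemidef) : A.det ≤ ∏ i, A i i := by
  by_cases! hzero : ∃ i, A i i = 0
  · obtain ⟨i, hi⟩ := hzero
    rw [hA.det_eq_zero_of_diag_eq_zero hi]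
    exact prod_nonneg fun i _ => hA.diag_nonneg
  have hpos : ∀ i, 0 < A i i := fun i => hA.diag_nonneg.lt_of_ne' (hzero i)
  set D := diagonal fun i => (√(A i i))⁻¹
  have hsq : ∀ i, (√(A i i))⁻¹ * (√(A i i))⁻¹ = (A i i)⁻¹ := fun i => by
    rw [← mul_inv, Real.mul_self_sqrt (hpos i).le]
  have hN : (D * A * D).PosSemidef := by
    simpa [D] using hA.conjTranspose_mul_mul_same D
  have hdiag : ∀ i, (D * A * D) i i = 1 := fun i => by
    simp only [D, mul_diagonal, diagonal_mul]
    rw [mul_right_comm, hsq, inv_mul_cancel₀ (hpos i).ne']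
  have hdet : (D * A * D).det = A.det / ∏ i, A i i := by
    simp only [D, det_mul, det_diagonal]
    rw [mul_right_comm, ← prod_mul_distrib, mul_comm, prod_congr rfl fun i _ => hsq i,
      prod_inv_distrib, div_eq_mul_inv]
  have := hN.det_le_one_of_diag_eq_one hdiag
  rwa [hdet, div_le_one (prod_pos fun i _ => hpos i)] at this

end Matrix.PosSemidef

theorem stmt_3 (n : ℕ) (M : Matrix (Fin n) (Fin n) ℝ) (hM : M.PosSemidef) :
    M.det ≤ ∏ i : Fin n, M i i :=
  hM.det_le_prod_diag
end

section
/- The set function A ↦ log det(I_{|A|} + α·L_A), where L is an n×n positive semi-definite matrix and L_A its principal submatrix indexed by A, is submodular: for A ⊆ B ⊆ {1,...,n} and i ∉ B, the marginal gain of adding i to A is at least the marginal gain of adding i to B. -/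
noncomputable def logDetSub9 (n : ℕ) (L : Matrix (Fin n) (Fin n) ℝ) (α : ℝ)
    (A : Finset (Fin n)) : ℝ :=
  Real.log (Matrix.det
    (1 + α • L.submatrix (Subtype.val : A → Fin n) (Subtype.val : A → Fin n)))

/-!
For positive definite `M`, the Schur complement formula turns the marginal gain
`log det M_{S ∪ {i}} - log det M_S` into `log (M i i - r_Sᵀ M_S⁻¹ r_S)`, where
`r_S = (M i j)_{j ∈ S}`.
By the variational formula `wᵀ N⁻¹ w = max_x (2 wᵀ x - xᵀ N x)`, the quadratic form `r_Sᵀ M_S⁻¹ r_S`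
grows with `S`: for `A ⊆ B`, vectors supported on `A` compete in the maximum defining it for `B`.
The theorem is the case `M = 1 + α • L`.
-/

open Matrix Finset Function

namespace Matrix

section ExtendByZero

variable {k m : Type*} [Fintype k] [Fintype m]

theorem dotProduct_extend_zero {f : k → m} (hf : Injective f) (u : m → ℝ) (z : k → ℝ) :
    u ⬝ᵥ extend f z 0 = (u ∘ f) ⬝ᵥ z :=
  (Fintype.sum_of_injective f hf _ _ (fun a ha => by simp [extend_apply' _ _ _ ha])
    (fun b => by simp [hf.extend_apply])).symm

theorem extend_zero_dotProduct_mulVec (N : Matrix m m ℝ) {f : k → m} (hf : Injective f)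
    (z : k → ℝ) : extend f z 0 ⬝ᵥ N *ᵥ extend f z 0 = z ⬝ᵥ N.submatrix f f *ᵥ z := by
  have hNx : N *ᵥ extend f z 0 = N.submatrix id f *ᵥ z :=
    funext fun a => dotProduct_extend_zero hf (N a) z
  rw [hNx, dotProduct_comm, dotProduct_extend_zero hf, dotProduct_comm]
  rfl

end ExtendByZero

section QuadraticForm

variable {k m : Type*} [Fintype k] [Fintype m]

theorem PosDef.dotProduct_mulVec_comm {N : Matrix m m ℝ} (hN : N.PosDef) (u v : m → ℝ) :
    u ⬝ᵥ N *ᵥ v = v ⬝ᵥ N *ᵥ u := by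
  have hT : Nᵀ = N := (isHermitian_iff_isSymm.mp hN.isHermitian).eq
  rw [dotProduct_mulVec, ← hT, vecMul_transpose, hT, dotProduct_comm]

variable [DecidableEq m]

theorem PosDef.isGreatest_two_mul_dotProduct_sub {N : Matrix m m ℝ} (hN : N.PosDef)
    (w : m → ℝ) :
    IsGreatest (Set.range fun x => 2 * (w ⬝ᵥ x) - x ⬝ᵥ N *ᵥ x) (w ⬝ᵥ N⁻¹ *ᵥ w) := by
  set z := N⁻¹ *ᵥ w
  have hz : N *ᵥ z = w := by
    rw [mulVec_mulVec, mul_nonsing_inv N ((isUnit_iff_isUnit_det N).mp hN.isUnit), one_mulVec]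
  refine ⟨⟨z, by simp only [hz, dotProduct_comm z w]; ring⟩, ?_⟩
  rintro _ ⟨x, rfl⟩
  have hnonneg := hN.posSemidef.dotProduct_mulVec_nonneg (x - z)
  simp only [star_trivial, mulVec_sub, dotProduct_sub, sub_dotProduct, hz,
    hN.dotProduct_mulVec_comm z x] at hnonneg
  rw [dotProduct_comm x w, dotProduct_comm z w] at hnonneg
  linarith

theorem PosDef.dotProduct_inv_mulVec_submatrix_le [DecidableEq k] {N : Matrix m m ℝ}
    (hN : N.PosDef) {f : k → m} (hf : Injective f) (w : m → ℝ) :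
    (w ∘ f) ⬝ᵥ (N.submatrix f f)⁻¹ *ᵥ (w ∘ f) ≤ w ⬝ᵥ N⁻¹ *ᵥ w := by
  obtain ⟨⟨z, hz⟩, -⟩ := (hN.submatrix hf).isGreatest_two_mul_dotProduct_sub (w ∘ f)
  calc _ = 2 * ((w ∘ f) ⬝ᵥ z) - z ⬝ᵥ N.submatrix f f *ᵥ z := hz.symm
    _ = 2 * (w ⬝ᵥ extend f z 0) - extend f z 0 ⬝ᵥ N *ᵥ extend f z 0 := by
      rw [dotProduct_extend_zero hf, extend_zero_dotProduct_mulVec N hf]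
    _ ≤ _ := (hN.isGreatest_two_mul_dotProduct_sub w).2 ⟨_, rfl⟩

end QuadraticForm

section PrincipalSubmatrix

variable {ι K : Type*}

def principalSubmatrix (M : Matrix ι ι K) (S : Finset ι) : Matrix S S K :=
  M.submatrix Subtype.val Subtype.val

noncomputable def insertSchurComplement [DecidableEq ι] [Field K] (M : Matrix ι ι K)
    (S : Finset ι) (i : ι) : K :=
  M i i - (fun j : S => M i j) ⬝ᵥ (M.principalSubmatrix S)⁻¹ *ᵥ fun j : S => M j i

theorem PosDef.principalSubmatrix {M : Matrix ι ι ℝ} (hM : M.PosDef) (S : Finset ι) :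
    (M.principalSubmatrix S).PosDef :=
  hM.submatrix Subtype.val_injective

variable [DecidableEq ι]

theorem det_principalSubmatrix_insert [Field K] (M : Matrix ι ι K) {i : ι} {S : Finset ι}
    (hi : i ∉ S) (hS : IsUnit (M.principalSubmatrix S).det) :
    (M.principalSubmatrix (insert i S)).det =
      (M.principalSubmatrix S).det * M.insertSchurComplement S i := by
  let e := (subtypeInsertEquivOption hi).trans (Equiv.optionEquivSumPUnit.{0} S)
  have : Invertible (M.principalSubmatrix S) := invertibleOfIsUnitDet _ hS
  have hblock : (M.principalSubmatrix (insert i S)).submatrix e.symm e.symm =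
      fromBlocks (M.principalSubmatrix S) (of fun j _ => M j i) (of fun _ j => M i j)
        (of fun _ _ => M i i) := by
    ext (j | _) (k | _) <;> rfl
  rw [← det_submatrix_equiv_self e.symm, hblock, det_fromBlocks₁₁, det_unique (n := PUnit),
    invOf_eq_nonsing_inv, insertSchurComplement]
  congr 1
  simp only [sub_apply, of_apply, mul_apply, dotProduct, mulVec, Finset.mul_sum, Finset.sum_mul]
  rw [Finset.sum_comm]
  simp only [mul_assoc]

variable {M : Matrix ι ι ℝ}

theorem PosDef.insertSchurComplement_pos (hM : M.PosDef) {i : ι} {S : Finset ι} (hi : i ∉ S) :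
    0 < M.insertSchurComplement S i := by
  have h := (hM.principalSubmatrix (insert i S)).det_pos
  rw [det_principalSubmatrix_insert M hi (hM.principalSubmatrix S).det_pos.ne'.isUnit] at h
  exact pos_of_mul_pos_right h (hM.principalSubmatrix S).det_pos.le

theorem PosDef.insertSchurComplement_antitone (hM : M.PosDef) {A B : Finset ι} (hAB : A ⊆ B)
    (i : ι) : M.insertSchurComplement B i ≤ M.insertSchurComplement A i := by
  have hsymm : ∀ j k, M j k = M k j := fun j k =>
    congrFun₂ (isHermitian_iff_isSymm.mp hM.isHermitian).eq k j
  have hle := (hM.principalSubmatrix B).dotProduct_inv_mulVec_submatrix_le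
    (f := fun j : A => (⟨j, hAB j.2⟩ : B)) (fun _ _ h => Subtype.ext (Subtype.mk.inj h))
    (fun j => M i j)
  simp only [insertSchurComplement, hsymm _ i]
  exact sub_le_sub_left hle _

theorem PosDef.log_det_principalSubmatrix_insert_sub_le (hM : M.PosDef) {A B : Finset ι}
    (hAB : A ⊆ B) {i : ι} (hi : i ∉ B) :
    Real.log (M.principalSubmatrix (insert i B)).det - Real.log (M.principalSubmatrix B).det ≤
      Real.log (M.principalSubmatrix (insert i A)).det -
        Real.log (M.principalSubmatrix A).det := by
  have hgain : ∀ S : Finset ι, i ∉ S →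
      Real.log (M.principalSubmatrix (insert i S)).det - Real.log (M.principalSubmatrix S).det =
        Real.log (M.insertSchurComplement S i) := fun S hiS => by
    have hdet := (hM.principalSubmatrix S).det_pos
    rw [det_principalSubmatrix_insert M hiS hdet.ne'.isUnit,
      Real.log_mul hdet.ne' (hM.insertSchurComplement_pos hiS).ne', add_sub_cancel_left]
  rw [hgain B hi, hgain A (fun h => hi (hAB h))]
  exact Real.log_le_log (hM.insertSchurComplement_pos hi) (hM.insertSchurComplement_antitone hAB i)

end PrincipalSubmatrix

end Matrix

theorem stmt_9 (n : ℕ) (L : Matrix (Fin n) (Fin n) ℝ) (hL : L.PosSemidef) (α : ℝ)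
    (hα : 0 < α) (A B : Finset (Fin n)) (hAB : A ⊆ B) (i : Fin n) (hi : i ∉ B) :
    logDetSub9 n L α (insert i B) - logDetSub9 n L α B ≤
      logDetSub9 n L α (insert i A) - logDetSub9 n L α A := by
  have hM : (1 + α • L).PosDef := PosDef.one.add_posSemidef (hL.smul hα.le)
  have hlogDet : ∀ S, logDetSub9 n L α S = Real.log ((1 + α • L).principalSubmatrix S).det :=
    fun S => by
      rw [logDetSub9]
      congr 2
      ext j k
      simp only [principalSubmatrix, submatrix_apply, Matrix.add_apply, Matrix.smul_apply,
        one_apply, Subtype.ext_iff]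
  simpa only [hlogDet] using hM.log_det_principalSubmatrix_insert_sub_le hAB hi
end

section
/- For Z ∈ ℝ^{d×n} partitioned by a family of disjoint index sets C_1,...,C_c covering {1,...,n}, with |C_i| = n_i, the quantity R(Z) − Σ_i (n_i/n)·R_i, where R(Z) = (1/2) log det(I + (d/(n ε²)) Z Zᵀ) and R_i = (1/2) log det(I + (d/(n_i ε²)) Z_{C_i} Z_{C_i}ᵀ), is nonnegative. -/
/-!
Write `P i = 1 + (d / (nᵢ ε²)) Z_{Cᵢ} Z_{Cᵢ}ᵀ`. Since `Z Zᵀ = ∑ᵢ Z_{Cᵢ} Z_{Cᵢ}ᵀ` and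
`∑ᵢ nᵢ = n`, the convex combination `∑ᵢ (nᵢ / n) P i` is exactly `1 + (d / (n ε²)) Z Zᵀ`, so the
claim is Jensen's inequality for the concave function `log det` on positive definite matrices.
Concavity reduces, after the congruence `a A + b B = S (a + b M) S` with `S = √A`, to the
weighted AM-GM inequality `μ ^ b ≤ a + b μ` on the eigenvalues `μ` of `M = S⁻¹ B S⁻¹`.
-/

open Matrix Function
open scoped MatrixOrder

variable {m : Type*} [Fintype m] [DecidableEq m]

theorem Matrix.IsHermitian.det_cfc {M : Matrix m m ℝ} (hM : M.IsHermitian) (f : ℝ → ℝ) :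
    (cfc f M).det = ∏ i, f (hM.eigenvalues i) := by
  simp [hM.cfc_eq, IsHermitian.cfc, -Unitary.conjStarAlgAut_apply]

theorem Matrix.IsHermitian.det_smul_one_add_smul {M : Matrix m m ℝ} (hM : M.IsHermitian)
    (a b : ℝ) : (a • 1 + b • M).det = ∏ i, (a + b * hM.eigenvalues i) := by
  have hMsa : IsSelfAdjoint M := hM
  rw [← hM.det_cfc (fun x => a + b * x), cfc_add .., cfc_const_mul .., cfc_const ..,
    cfc_id' ℝ M, Algebra.algebraMap_eq_smul_one]

theorem Matrix.PosSemidef.det_rpow_le_det_smul_one_add_smul {M : Matrix m m ℝ} (hM : M.PosSemidef)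
    {a b : ℝ} (ha : 0 ≤ a) (hb : 0 ≤ b) (hab : a + b = 1) :
    M.det ^ b ≤ (a • 1 + b • M).det := by
  rw [hM.1.det_smul_one_add_smul, hM.1.det_eq_prod_eigenvalues, RCLike.ofReal_real_eq_id,
    Function.id_def, ← Real.finsetProd_rpow _ _ fun i _ => hM.eigenvalues_nonneg i]
  gcongr with i
  · exact fun i _ => Real.rpow_nonneg (hM.eigenvalues_nonneg i) b
  · simpa using
      Real.geom_mean_le_arith_mean2_weighted ha hb zero_le_one (hM.eigenvalues_nonneg i) hab

theorem Matrix.PosDef.det_rpow_mul_det_rpow_le {A B : Matrix m m ℝ} (hA : A.PosDef)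
    (hB : B.PosSemidef) {a b : ℝ} (ha : 0 ≤ a) (hb : 0 ≤ b) (hab : a + b = 1) :
    A.det ^ a * B.det ^ b ≤ (a • A + b • B).det := by
  set S := CFC.sqrt A
  have hSS : S * S = A := CFC.sqrt_mul_sqrt_self A hA.posSemidef.nonneg
  have hSH : S.IsHermitian :=
    (Matrix.nonneg_iff_posSemidef.mp (CFC.sqrt_nonneg A)).isHermitian
  have hSdet : IsUnit S.det :=
    (Matrix.isUnit_iff_isUnit_det S).mp ((CFC.isUnit_sqrt_iff A).mpr hA.isUnit)
  obtain ⟨M, hM, hSMS⟩ : ∃ M : Matrix m m ℝ, M.PosSemidef ∧ S * M * S = B := by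
    refine ⟨S⁻¹ * B * S⁻¹, ?_, ?_⟩
    · have := hB.mul_mul_conjTranspose_same S⁻¹
      rwa [hSH.inv.eq] at this
    · simp only [← Matrix.mul_assoc, mul_nonsing_inv _ hSdet, Matrix.one_mul]
      rw [Matrix.mul_assoc, nonsing_inv_mul _ hSdet, Matrix.mul_one]
  have hdetB : B.det = A.det * M.det := by
    rw [← hSMS, ← hSS, det_mul, det_mul, det_mul]; ring
  have hcongr : a • A + b • B = S * (a • 1 + b • M) * S := by
    rw [← hSS, ← hSMS]
    simp only [Matrix.mul_add, Matrix.add_mul, Matrix.mul_smul, Matrix.smul_mul, Matrix.mul_one]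
  have hA0 := hA.det_pos
  calc A.det ^ a * B.det ^ b = A.det * M.det ^ b := by
        rw [hdetB, Real.mul_rpow hA0.le hM.det_nonneg, ← mul_assoc, ← Real.rpow_add hA0, hab,
          Real.rpow_one]
    _ ≤ A.det * (a • 1 + b • M).det := by
        gcongr; exact hM.det_rpow_le_det_smul_one_add_smul ha hb hab
    _ = (a • A + b • B).det := by
        rw [hcongr, ← hSS, det_mul, det_mul, det_mul]; ring

theorem Matrix.concaveOn_log_det :
    ConcaveOn ℝ {A : Matrix m m ℝ | A.PosDef} (fun A => Real.log A.det) := by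
  constructor
  · intro A hA B hB a b ha hb hab
    rcases ha.eq_or_lt with rfl | ha
    · simpa [show b = 1 by linarith] using hB
    · exact (hA.smul ha).add_posSemidef (hB.posSemidef.smul hb)
  · intro A hA B hB a b ha hb hab
    have hAa := Real.rpow_pos_of_pos hA.det_pos a
    have hBb := Real.rpow_pos_of_pos hB.det_pos b
    calc a • Real.log A.det + b • Real.log B.det = Real.log (A.det ^ a * B.det ^ b) := by
          rw [Real.log_mul hAa.ne' hBb.ne', Real.log_rpow hA.det_pos, Real.log_rpow hB.det_pos]
          rfl
      _ ≤ Real.log (a • A + b • B).det :=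
          Real.log_le_log (mul_pos hAa hBb) (hA.det_rpow_mul_det_rpow_le hB.posSemidef ha hb hab)

theorem Finset.sum_sum_eq_sum_of_partition {ι κ M : Type*} [Fintype ι] [Fintype κ]
    [AddCommMonoid M] {C : ι → Finset κ} (hdisj : Pairwise (Disjoint on C))
    (hcover : ∀ x, ∃ i, x ∈ C i) (f : κ → M) :
    ∑ i, ∑ k ∈ C i, f k = ∑ k, f k := by
  classical
  rw [← Finset.sum_biUnion (hdisj.set_pairwise _)]
  congr
  ext x
  simpa using hcover x

theorem Matrix.submatrix_mul_transpose_submatrix_apply {l κ R : Type*} [CommSemiring R]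
    (Z : Matrix l κ R) (s : Finset κ) (a b : l) :
    (Z.submatrix id (Subtype.val : s → κ) * (Z.submatrix id (Subtype.val : s → κ))ᵀ) a b =
      ∑ k ∈ s, Z a k * Z b k :=
  Finset.sum_coe_sort s fun k => Z a k * Z b k

theorem Matrix.sum_submatrix_mul_transpose_of_partition {ι κ l R : Type*} [Fintype ι]
    [Fintype κ] [CommSemiring R] (Z : Matrix l κ R) {C : ι → Finset κ}
    (hdisj : Pairwise (Disjoint on C)) (hcover : ∀ x, ∃ i, x ∈ C i) :
    ∑ i, Z.submatrix id (Subtype.val : C i → κ) * (Z.submatrix id (Subtype.val : C i → κ))ᵀ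
      = Z * Zᵀ := by
  ext a b
  simp only [sum_apply, submatrix_mul_transpose_submatrix_apply]
  rw [mul_apply]
  exact Finset.sum_sum_eq_sum_of_partition hdisj hcover _

theorem Matrix.sum_mul_log_det_one_add_smul_le {ι : Type*} [Fintype ι] {k : ι → ℝ} {n t : ℝ}
    (hk : ∀ i, 0 < k i) (hsum : ∑ i, k i = n) (hn : 0 < n) (ht : 0 ≤ t)
    {X : ι → Matrix m m ℝ} (hX : ∀ i, (X i).PosSemidef) :
    ∑ i, k i / n * Real.log (1 + (t / k i) • X i).det ≤
      Real.log (1 + (t / n) • ∑ i, X i).det := by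
  have hw : ∑ i, k i / n = 1 := by rw [← Finset.sum_div, hsum, div_self hn.ne']
  have hmean : ∑ i, (k i / n) • (1 + (t / k i) • X i) = 1 + (t / n) • ∑ i, X i := by
    have hcoef : ∀ i, k i / n * (t / k i) = t / n := fun i => by field_simp [(hk i).ne']
    simp only [smul_add, smul_smul, hcoef, Finset.sum_add_distrib, ← Finset.sum_smul, hw,
      one_smul, ← Finset.smul_sum]
  have hjensen := concaveOn_log_det.le_map_sum (t := Finset.univ)
    (fun i _ => div_nonneg (hk i).le hn.le) hw
    (fun i _ => PosDef.one.add_posSemidef ((hX i).smul (div_nonneg ht (hk i).le)))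
  simpa only [smul_eq_mul, hmean] using hjensen

theorem stmt_10_general (d n c : ℕ) (hn : 0 < n) (Z : Matrix (Fin d) (Fin n) ℝ)
    (ε : ℝ) (C : Fin c → Finset (Fin n))
    (hdisj : ∀ i j, i ≠ j → Disjoint (C i) (C j))
    (hcover : ∀ x : Fin n, ∃ i, x ∈ C i)
    (hne : ∀ i, (C i).Nonempty) :
    0 ≤ (1 / 2 : ℝ) * Real.log (Matrix.det (1 + ((d : ℝ) / (n * ε ^ 2)) • (Z * Zᵀ))) -
      ∑ i : Fin c, (((C i).card : ℝ) / (n : ℝ)) *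
        ((1 / 2 : ℝ) * Real.log (Matrix.det (1 + ((d : ℝ) / ((C i).card * ε ^ 2)) •
          (Z.submatrix id (Subtype.val : (C i) → Fin n) *
            (Z.submatrix id (Subtype.val : (C i) → Fin n))ᵀ)))) := by
  have hcard : ∀ i, (0 : ℝ) < (C i).card := fun i => mod_cast (hne i).card_pos
  have hsum : ∑ i, ((C i).card : ℝ) = n := by
    simpa using congrArg (Nat.cast : ℕ → ℝ)
      (Finset.sum_sum_eq_sum_of_partition (fun i j => hdisj i j) hcover fun _ => 1)
  have hpsd : ∀ i, (Z.submatrix id (Subtype.val : C i → Fin n) *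
      (Z.submatrix id (Subtype.val : C i → Fin n))ᵀ).PosSemidef := fun i => by
    simpa using posSemidef_self_mul_conjTranspose (Z.submatrix id (Subtype.val : C i → Fin n))
  have key := sum_mul_log_det_one_add_smul_le hcard hsum (Nat.cast_pos.mpr hn)
    (div_nonneg (Nat.cast_nonneg d) (sq_nonneg ε)) hpsd
  rw [sum_submatrix_mul_transpose_of_partition Z (fun i j => hdisj i j) hcover] at key
  simp only [div_mul_eq_div_div_swap, sub_nonneg, mul_left_comm _ (1 / 2 : ℝ), ← Finset.mul_sum]
  gcongr

theorem stmt_10 (d n c : ℕ) (hn : 0 < n) (Z : Matrix (Fin d) (Fin n) ℝ)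
    (ε : ℝ) (hε : 0 < ε) (C : Fin c → Finset (Fin n))
    (hdisj : ∀ i j, i ≠ j → Disjoint (C i) (C j))
    (hcover : ∀ x : Fin n, ∃ i, x ∈ C i)
    (hne : ∀ i, (C i).Nonempty) :
    0 ≤ (1 / 2 : ℝ) * Real.log (Matrix.det (1 + ((d : ℝ) / (n * ε ^ 2)) • (Z * Zᵀ))) -
      ∑ i : Fin c, (((C i).card : ℝ) / (n : ℝ)) *
        ((1 / 2 : ℝ) * Real.log (Matrix.det (1 + ((d : ℝ) / ((C i).card * ε ^ 2)) •
          (Z.submatrix id (Subtype.val : (C i) → Fin n) *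
            (Z.submatrix id (Subtype.val : (C i) → Fin n))ᵀ)))) :=
  stmt_10_general d n c hn Z ε C hdisj hcover hne
end
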